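/- arXiv:1603.08547 — 5 statements merged into one kernel-verified Lean document; each statement's English description precedes it below -/
import Mathlib

section
/- Let k be a field, C a small category and A a normal C-arrangement over k. Then the intersection semilattice of A is downward stable: for every morphism f : c -> d of C and every subspace x ∈ L_c, the map y ↦ V(f)^{-1}(y) is a bijection from {y ∈ L_c : y ⊋ x} onto {z ∈ L_d : z ⊋ V(f)^{-1}(x)} which preserves inclusions in both directions, and its inverse is the direct image map z ↦ V(f)(z). -/
open CategoryTheory

universe u v

/-- A contravariant diagram of finite-dimensional vector spaces with surjective
structure maps: the underlying diagram of vector spaces of a `C`-arrangement. -/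
structure VecDiagram (k : Type) [Field k] (C : Type u) [Category.{v} C] where
  V : C → Type
  [addcomm : ∀ c, AddCommGroup (V c)]
  [mod : ∀ c, Module k (V c)]
  findim : ∀ c, FiniteDimensional k (V c)
  Vmap : ∀ {c d : C}, (c ⟶ d) → (V d →ₗ[k] V c)
  Vmap_id : ∀ c : C, Vmap (𝟙 c) = LinearMap.id
  Vmap_comp : ∀ {c d e : C} (f : c ⟶ d) (g : d ⟶ e),
    Vmap (f ≫ g) = (Vmap f).comp (Vmap g)
  Vmap_surj : ∀ {c d : C} (f : c ⟶ d), Function.Surjective (Vmap f)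

attribute [instance] VecDiagram.addcomm VecDiagram.mod

variable {k : Type} [Field k] {C : Type u} [Category.{v} C]

/-- The intersection data of a `C`-arrangement on a fixed underlying diagram of
vector spaces. -/
structure ArrOn (D : VecDiagram k C) where
  L : ∀ c : C, Set (Submodule k (D.V c))
  L_fin : ∀ c, (L c).Finite
  L_inter : ∀ c, ∀ x ∈ L c, ∀ y ∈ L c, x ⊓ y ∈ L c
  L_comap : ∀ {c d : C} (f : c ⟶ d), ∀ x ∈ L c, Submodule.comap (D.Vmap f) x ∈ L d

/-- Normality of a `C`-arrangement. -/
def ArrOn.Normal {D : VecDiagram k C} (A : ArrOn D) : Prop :=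
  ∀ {c d : C} (f : c ⟶ d), ∀ x ∈ A.L d,
    LinearMap.ker (D.Vmap f) ≤ x → Submodule.map (D.Vmap f) x ∈ A.L c

/-- The intersection semilattice of a normal `C`-arrangement is downward stable:
for every morphism `f : c ⟶ d` and every `x ∈ L_c`, the preimage map
`y ↦ V(f)⁻¹(y)` is an inclusion-preserving bijection from the subspaces of `L_c`
strictly containing `x` onto the subspaces of `L_d` strictly containing
`V(f)⁻¹(x)`, with inverse the direct image map `z ↦ V(f)(z)`.
(Strict containment `x < y` of submodules is `y ⊋ x`, i.e. `y < x` in the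
intersection poset ordered by reverse inclusion.) -/
theorem downwardStable_of_normal {D : VecDiagram k C} (A : ArrOn D) (hA : A.Normal)
    {c d : C} (f : c ⟶ d) (x : Submodule k (D.V c)) (hx : x ∈ A.L c) :
    (∀ y ∈ A.L c, x < y →
        Submodule.comap (D.Vmap f) y ∈ A.L d ∧
        Submodule.comap (D.Vmap f) x < Submodule.comap (D.Vmap f) y) ∧
    (∀ y₁ ∈ A.L c, x < y₁ → ∀ y₂ ∈ A.L c, x < y₂ →
        (y₁ ≤ y₂ ↔ Submodule.comap (D.Vmap f) y₁ ≤ Submodule.comap (D.Vmap f) y₂)) ∧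
    (∀ z ∈ A.L d, Submodule.comap (D.Vmap f) x < z →
        Submodule.map (D.Vmap f) z ∈ A.L c ∧
        x < Submodule.map (D.Vmap f) z ∧
        Submodule.comap (D.Vmap f) (Submodule.map (D.Vmap f) z) = z) ∧
    (∀ y ∈ A.L c, x < y →
        Submodule.map (D.Vmap f) (Submodule.comap (D.Vmap f) y) = y) := by

  have hsurj := D.Vmap_surj f
  have hmc : ∀ p : Submodule k (D.V c),
      Submodule.map (D.Vmap f) (Submodule.comap (D.Vmap f) p) = p :=
    fun p => Submodule.map_comap_eq_of_surjective hsurj p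
  have hinj : ∀ p q : Submodule k (D.V c),
      Submodule.comap (D.Vmap f) p ≤ Submodule.comap (D.Vmap f) q → p ≤ q := by
    intro p q h
    have := Submodule.map_mono (f := D.Vmap f) h
    rwa [hmc, hmc] at this
  have hker : ∀ p : Submodule k (D.V c),
      LinearMap.ker (D.Vmap f) ≤ Submodule.comap (D.Vmap f) p := by
    intro p v hv
    simp only [LinearMap.mem_ker] at hv
    simp [Submodule.mem_comap, hv]
  refine ⟨?_, ?_, ?_, ?_⟩
  · intro y hy hxy
    refine ⟨A.L_comap f y hy, ?_⟩
    refine lt_of_le_of_ne (Submodule.comap_mono hxy.le) ?_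
    intro h
    exact hxy.ne (by rw [← hmc x, ← hmc y, h])
  · intro y₁ _ _ y₂ _ _
    exact ⟨Submodule.comap_mono, hinj y₁ y₂⟩
  · intro z hz hxz
    have hkz : LinearMap.ker (D.Vmap f) ≤ z := le_trans (hker x) hxz.le
    have hcm : Submodule.comap (D.Vmap f) (Submodule.map (D.Vmap f) z) = z := by
      rw [Submodule.comap_map_eq, sup_eq_left.2 hkz]
    refine ⟨hA f z hz hkz, ?_, hcm⟩
    have h1 : x ≤ Submodule.map (D.Vmap f) z := by
      have := Submodule.map_mono (f := D.Vmap f) hxz.le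
      rwa [hmc] at this
    refine lt_of_le_of_ne h1 ?_
    intro h
    exact hxz.ne (by rw [← hcm, ← h])
  · intro y _ _
    exact hmc y
end

section
/- Let C be a small category and (P, r) : C -> Pos a combinatorially stable C-poset. Then for every n ∈ ℤ the Whitney homology C-module over ℚ, c ↦ WH_n(P_c, r_c) := ⊕_{x ∈ P_c : r_c(x) = n} H̃_{n-2}(Δ(P_c^{<x}); ℚ), with homomorphisms induced by the poset maps P(f) (which send P_c^{<x} into P_d^{<P(f)(x)}), is a finitely generated C-module: there are finitely many elements whose images under the maps induced by all morphisms of C span WH_n(P_d, r_d) for every object d. -/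
open CategoryTheory AlgebraicTopology

noncomputable def posetCC (Q : Type) [PartialOrder Q] : ChainComplex (ModuleCat ℚ) ℕ :=
  (alternatingFaceMapComplex (ModuleCat ℚ)).obj (nerve Q ⋙ ModuleCat.free ℚ)

noncomputable def eps (Q : Type) [PartialOrder Q] : (posetCC Q).X 0 ⟶ ModuleCat.of ℚ ℚ :=
  ModuleCat.freeDesc (TypeCat.ofHom (fun _ => (1 : ℚ)))

lemma eps_apply (Q : Type) [PartialOrder Q] (y : (nerve Q).obj (Opposite.op (SimplexCategory.mk 0))) :
    eps Q (ModuleCat.freeMk y) = (1 : ℚ) :=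
  (ModuleCat.freeDesc_apply _ _).trans (TypeCat.ofHom_apply _ _)

lemma delta_comp_eps (Q : Type) [PartialOrder Q] (i : Fin 2) :
    SimplicialObject.δ (nerve Q ⋙ ModuleCat.free ℚ) i ≫ eps Q
      = ModuleCat.freeDesc (TypeCat.ofHom (fun _ => (1 : ℚ))) := by
  apply ModuleCat.free_hom_ext
  intro x
  show (eps Q) ((ModuleCat.free ℚ).map ((nerve Q).map (SimplexCategory.δ i).op) (ModuleCat.freeMk x)) = _
  rw [ModuleCat.free_map_apply, ModuleCat.freeDesc_apply]
  exact (ModuleCat.freeDesc_apply _ _).trans (TypeCat.ofHom_apply _ _)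

lemma d_comp_eps (Q : Type) [PartialOrder Q] : (posetCC Q).d 1 0 ≫ eps Q = 0 := by
  show ((alternatingFaceMapComplex (ModuleCat ℚ)).obj (nerve Q ⋙ ModuleCat.free ℚ)).d 1 0 ≫ eps Q = 0
  rw [alternatingFaceMapComplex_obj_d, AlternatingFaceMapComplex.objD, Fin.sum_univ_two,
    Fin.val_zero, pow_zero, one_smul, Fin.val_one, pow_one, neg_smul, one_smul]
  erw [Preadditive.add_comp, Preadditive.neg_comp]
  rw [delta_comp_eps Q 0, delta_comp_eps Q 1]
  exact add_neg_cancel _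

/-- The augmented simplicial chain complex of (the order complex of) a poset `Q`:
in degree `m` it has the free `ℚ`-module on the `(m-1)`-simplices of the nerve of
`Q` (with the `(-1)`-simplices being the single empty simplex), so that its
homology in degree `i + 1` is the reduced simplicial homology `H̃_i(Δ(Q); ℚ)`,
with the convention `H̃₋₁(∅; ℚ) = ℚ`. -/
noncomputable def augCC (Q : Type) [PartialOrder Q] : ChainComplex (ModuleCat ℚ) ℕ :=
  ChainComplex.of
    (fun n => match n with
      | 0 => ModuleCat.of ℚ ℚ
      | (n+1) => (posetCC Q).X n)
    (fun n => match n with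
      | 0 => eps Q
      | (n+1) => (posetCC Q).d (n+1) n)
    (fun n => match n with
      | 0 => d_comp_eps Q
      | (n+1) => (posetCC Q).d_comp_d (n+2) (n+1) n)

noncomputable def posetCCmap {Q R : Type} [PartialOrder Q] [PartialOrder R] (g : Q →o R) :
    posetCC Q ⟶ posetCC R :=
  (alternatingFaceMapComplex (ModuleCat ℚ)).map
    (Functor.whiskerRight (nerveFunctor.map (X := Cat.of Q) (Y := Cat.of R) g.monotone.functor.toCatHom)
      (ModuleCat.free ℚ))

lemma posetCCmap_comp_eps {Q R : Type} [PartialOrder Q] [PartialOrder R] (g : Q →o R) :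
    (posetCCmap g).f 0 ≫ eps R = eps Q := by
  apply ModuleCat.free_hom_ext
  intro x
  show (eps R) (((posetCCmap g).f 0) (ModuleCat.freeMk x)) = (eps Q) (ModuleCat.freeMk x)
  rw [posetCCmap]; erw [alternatingFaceMapComplex_map_f]
  show (eps R) ((ModuleCat.free ℚ).map _ (ModuleCat.freeMk x)) = (eps Q) (ModuleCat.freeMk x)
  erw [ModuleCat.free_map_apply]
  rw [eps_apply, eps_apply]

/-- The chain map on augmented complexes induced by a monotone map of posets. -/
noncomputable def augCCmap {Q R : Type} [PartialOrder Q] [PartialOrder R] (g : Q →o R) :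
    augCC Q ⟶ augCC R where
  f n := match n with
    | 0 => 𝟙 (ModuleCat.of ℚ ℚ)
    | (n+1) => (posetCCmap g).f n
  comm' := by
    intro i j hij
    obtain rfl : j + 1 = i := hij
    match j with
    | 0 =>
      show (posetCCmap g).f 0 ≫ (augCC R).d 1 0 = (augCC Q).d 1 0 ≫ 𝟙 _
      rw [Category.comp_id]
      rw [show (augCC R).d 1 0 = eps R from by simp only [augCC, ChainComplex.of.d]; rfl,
          show (augCC Q).d 1 0 = eps Q from by simp only [augCC, ChainComplex.of.d]; rfl]
      exact posetCCmap_comp_eps g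
    | (n+1) =>
      show (posetCCmap g).f (n+1) ≫ (augCC R).d (n+2) (n+1) = (augCC Q).d (n+2) (n+1) ≫ (posetCCmap g).f n
      rw [show (augCC R).d (n+2) (n+1) = (posetCC R).d (n+1) n from by simp only [augCC, ChainComplex.of.d]; exact (dif_pos (rfl : n + 2 = n + 1 + 1)).trans (Category.id_comp _),
          show (augCC Q).d (n+2) (n+1) = (posetCC Q).d (n+1) n from by simp only [augCC, ChainComplex.of.d]; exact (dif_pos (rfl : n + 2 = n + 1 + 1)).trans (Category.id_comp _)]
      exact (posetCCmap g).comm (n+1) n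

/-- Reduced simplicial homology (with `ℚ`-coefficients) of the order complex of
a finite poset, with the convention `H̃₋₁(∅; ℚ) = ℚ` and `H̃_i = 0` for `i < -1`. -/
noncomputable def reducedH (Q : Type) [PartialOrder Q] : ℤ → ModuleCat ℚ
  | Int.ofNat n => (augCC Q).homology (n + 1)
  | Int.negSucc 0 => (augCC Q).homology 0
  | Int.negSucc (_ + 1) => ModuleCat.of ℚ PUnit

/-- The map induced on reduced homology of order complexes by a monotone map. -/
noncomputable def reducedHmap {Q R : Type} [PartialOrder Q] [PartialOrder R] (g : Q →o R) :
    ∀ i : ℤ, reducedH Q i ⟶ reducedH R i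
  | Int.ofNat n => HomologicalComplex.homologyMap (augCCmap g) (n + 1)
  | Int.negSucc 0 => HomologicalComplex.homologyMap (augCCmap g) 0
  | Int.negSucc (_ + 1) => 0

universe u v

/-- A `C`-poset: a functor from `C` to the category of finite ranked posets. -/
structure CPoset (C : Type u) [CategoryTheory.Category.{v} C] where
  P : C → Type
  [po : ∀ c, PartialOrder (P c)]
  [pfin : ∀ c, Finite (P c)]
  rk : ∀ c, P c → ℤ
  rk_strictMono : ∀ c, StrictMono (rk c)
  map : ∀ {c d : C}, (c ⟶ d) → (P c →o P d)
  map_id : ∀ c : C, map (𝟙 c) = OrderHom.id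
  map_comp : ∀ {c d e : C} (f : c ⟶ d) (g : d ⟶ e), map (f ≫ g) = (map g).comp (map f)
  map_rk : ∀ {c d : C} (f : c ⟶ d) (x : P c), rk d (map f x) = rk c x

attribute [instance] CPoset.po CPoset.pfin

variable {C : Type u} [Category.{v} C]

/-- Finite generation of a `C`-poset: in each rank, finitely many elements
generate everything under the maps induced by morphisms of `C`. -/
def CPoset.FinGen (P : CPoset C) : Prop :=
  ∀ n : ℤ, ∃ (N : ℕ) (cs : Fin N → C) (xs : ∀ i, P.P (cs i)),
    (∀ i, P.rk (cs i) (xs i) = n) ∧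
    ∀ (d : C) (y : P.P d), P.rk d y = n →
      ∃ (i : Fin N) (f : cs i ⟶ d), P.map f (xs i) = y

/-- Downward stability of a `C`-poset: each induced map restricts to a poset
isomorphism `P_c^{<x} ≅ P_d^{<f(x)}`. -/
def CPoset.DownwardStable (P : CPoset C) : Prop :=
  ∀ {c d : C} (f : c ⟶ d) (x : P.P c),
    Set.BijOn (P.map f) {y | y < x} {z | z < P.map f x} ∧
    ∀ y₁ y₂ : P.P c, y₁ < x → y₂ < x → P.map f y₁ ≤ P.map f y₂ → y₁ ≤ y₂

/-- For `x` in a `C`-poset and `f : c ⟶ d`, the strict order ideal below `x`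
maps to the strict order ideal below `f(x)`. -/
def CPoset.mapBelow (P : CPoset C) {c d : C} (f : c ⟶ d) (x : P.P c) :
    {y : P.P c // y < x} →o {z : P.P d // z < P.map f x} where
  toFun y := ⟨P.map f y.1, by
    refine lt_of_le_of_ne ((P.map f).monotone (le_of_lt y.2)) ?_
    intro h
    have h1 : P.rk d (P.map f y.1) = P.rk c y.1 := P.map_rk f y.1
    have h2 : P.rk d (P.map f x) = P.rk c x := P.map_rk f x
    have h3 : P.rk c y.1 < P.rk c x := P.rk_strictMono c y.2
    rw [h] at h1
    omega⟩
  monotone' := fun y₁ y₂ h => (P.map f).monotone h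

open scoped DirectSum in
/-- The `n`-th Whitney homology of (the value at `c` of) a `C`-poset. -/
noncomputable def WH (P : CPoset C) (n : ℤ) (c : C) : Type :=
  ⨁ (x : {x : P.P c // P.rk c x = n}), ↥(reducedH {y : P.P c // y < x.1} (n - 2))

noncomputable instance (P : CPoset C) (n : ℤ) (c : C) : AddCommGroup (WH P n c) := by
  unfold WH; infer_instance

noncomputable instance (P : CPoset C) (n : ℤ) (c : C) : Module ℚ (WH P n c) := by
  unfold WH; infer_instance

/-- The map induced on Whitney homology by a morphism of `C`. -/
noncomputable def WHmap (P : CPoset C) (n : ℤ) {c d : C} (f : c ⟶ d) :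
    WH P n c →ₗ[ℚ] WH P n d :=
  letI := Classical.decEq {x : P.P c // P.rk c x = n}
  letI := Classical.decEq {x : P.P d // P.rk d x = n}
  DirectSum.toModule ℚ {x : P.P c // P.rk c x = n} (WH P n d) (fun x =>
    (DirectSum.lof ℚ {x' : P.P d // P.rk d x' = n}
        (fun x' => ↥(reducedH {y : P.P d // y < x'.1} (n - 2)))
        ⟨P.map f x.1, by rw [P.map_rk]; exact x.2⟩).comp
      ((reducedHmap (P.mapBelow f x.1) (n - 2)).hom : _ →ₗ[ℚ] _))

/-! Downward stability makes each `P(f) : P_c^{<x} → P_d^{<f(x)}` an isomorphism, so the map it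
induces on `H̃_{n-2}` is onto: the summand of `WH_n(P_d)` at `f(x)` is the image of the summand
of `WH_n(P_c)` at `x`. Hence the finitely many rank-`n` generators `x_i` of `P`, together with
a finite spanning family of each finite-dimensional `H̃_{n-2}(Δ(P^{<x_i}); ℚ)`, generate `WH_n`. -/

noncomputable def posetChainsFunctor : Cat.{0, 0} ⥤ ChainComplex (ModuleCat ℚ) ℕ :=
  nerveFunctor ⋙ (Functor.whiskeringRight _ _ _).obj (ModuleCat.free ℚ) ⋙
    alternatingFaceMapComplex (ModuleCat ℚ)

lemma posetCCmap_id (Q : Type) [PartialOrder Q] :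
    posetCCmap (OrderHom.id : Q →o Q) = 𝟙 (posetCC Q) :=
  posetChainsFunctor.map_id (Cat.of Q)

lemma posetCCmap_comp {Q R S : Type} [PartialOrder Q] [PartialOrder R] [PartialOrder S]
    (g : R →o S) (h : Q →o R) :
    posetCCmap (g.comp h) = posetCCmap h ≫ posetCCmap g :=
  posetChainsFunctor.map_comp (X := Cat.of Q) (Y := Cat.of R) (Z := Cat.of S)
    h.monotone.functor.toCatHom g.monotone.functor.toCatHom

lemma augCCmap_id (Q : Type) [PartialOrder Q] :
    augCCmap (OrderHom.id : Q →o Q) = 𝟙 (augCC Q) := by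
  ext (_ | n) : 1
  · rfl
  · exact congrArg (fun φ => HomologicalComplex.Hom.f φ n) (posetCCmap_id Q)

lemma augCCmap_comp {Q R S : Type} [PartialOrder Q] [PartialOrder R] [PartialOrder S]
    (g : R →o S) (h : Q →o R) :
    augCCmap (g.comp h) = augCCmap h ≫ augCCmap g := by
  ext (_ | n) : 1
  · exact (Category.comp_id _).symm
  · exact congrArg (fun φ => HomologicalComplex.Hom.f φ n) (posetCCmap_comp g h)

lemma reducedHmap_id (Q : Type) [PartialOrder Q] (i : ℤ) :
    reducedHmap (OrderHom.id : Q →o Q) i = 𝟙 (reducedH Q i) := by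
  match i with
  | Int.ofNat m =>
    show HomologicalComplex.homologyMap _ _ = _
    rw [augCCmap_id, HomologicalComplex.homologyMap_id]; rfl
  | Int.negSucc 0 =>
    show HomologicalComplex.homologyMap _ _ = _
    rw [augCCmap_id, HomologicalComplex.homologyMap_id]; rfl
  | Int.negSucc (_ + 1) => exact ModuleCat.hom_ext (LinearMap.ext fun _ => rfl)

lemma reducedHmap_comp {Q R S : Type} [PartialOrder Q] [PartialOrder R] [PartialOrder S]
    (g : R →o S) (h : Q →o R) (i : ℤ) :
    reducedHmap (g.comp h) i = reducedHmap h i ≫ reducedHmap g i := by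
  match i with
  | Int.ofNat m =>
    show HomologicalComplex.homologyMap _ _ = _
    rw [augCCmap_comp, HomologicalComplex.homologyMap_comp]; rfl
  | Int.negSucc 0 =>
    show HomologicalComplex.homologyMap _ _ = _
    rw [augCCmap_comp, HomologicalComplex.homologyMap_comp]; rfl
  | Int.negSucc (_ + 1) => exact Limits.comp_zero.symm

lemma reducedHmap_surjective_of_comp_eq_id {Q R : Type} [PartialOrder Q] [PartialOrder R]
    {g : Q →o R} {h : R →o Q} (hgh : g.comp h = OrderHom.id) (i : ℤ) :
    Function.Surjective (reducedHmap g i) := fun z =>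
  ⟨reducedHmap h i z, by
    rw [← ConcreteCategory.comp_apply, ← reducedHmap_comp, hgh, reducedHmap_id]; rfl⟩

instance nerve_obj_finite (Q : Type) [PartialOrder Q] [Finite Q] (m : ℕ) :
    Finite ((nerve Q).obj (Opposite.op (SimplexCategory.mk m))) :=
  Finite.of_injective (fun F : ComposableArrows Q m => F.obj) fun _ _ h =>
    CategoryTheory.Functor.ext (congrFun h) fun _ _ _ => Subsingleton.elim _ _

instance augCC_X_finite (Q : Type) [PartialOrder Q] [Finite Q] (m : ℕ) :
    Module.Finite ℚ ((augCC Q).X m) :=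
  match m with
  | 0 => inferInstanceAs (Module.Finite ℚ ℚ)
  | k + 1 => inferInstanceAs
      (Module.Finite ℚ ((nerve Q).obj (Opposite.op (SimplexCategory.mk k)) →₀ ℚ))

instance augCC_homology_finite (Q : Type) [PartialOrder Q] [Finite Q] (m : ℕ) :
    Module.Finite ℚ ((augCC Q).homology m) :=
  have : Module.Finite ℚ ((augCC Q).cycles m) :=
    .of_injective ((augCC Q).iCycles m).hom ((ModuleCat.mono_iff_injective _).1 inferInstance)
  .of_surjective ((augCC Q).homologyπ m).hom ((ModuleCat.epi_iff_surjective _).1 inferInstance)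

instance reducedH_finite (Q : Type) [PartialOrder Q] [Finite Q] (i : ℤ) :
    Module.Finite ℚ (reducedH Q i) :=
  match i with
  | Int.ofNat m => augCC_homology_finite Q (m + 1)
  | Int.negSucc 0 => augCC_homology_finite Q 0
  | Int.negSucc (_ + 1) => inferInstanceAs (Module.Finite ℚ PUnit)

lemma exists_fin_generators {R : Type*} [Semiring R] {M : C → Type*}
    [∀ c, AddCommMonoid (M c)] [∀ c, Module R (M c)]
    (φ : ∀ {c d : C}, (c ⟶ d) → M c →ₗ[R] M d) {T : Type*} [Finite T] (cs : T → C)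
    (v : ∀ t, M (cs t))
    (hv : ∀ d, Submodule.span R {w | ∃ (t : T) (f : cs t ⟶ d), φ f (v t) = w} = ⊤) :
    ∃ (N : ℕ) (cs' : Fin N → C) (v' : ∀ i, M (cs' i)),
      ∀ d, Submodule.span R {w | ∃ (i : Fin N) (f : cs' i ⟶ d), φ f (v' i) = w} = ⊤ := by
  obtain ⟨N, ⟨e⟩⟩ := Finite.exists_equiv_fin T
  refine ⟨N, fun i => cs (e.symm i), fun i => v (e.symm i), fun d => ?_⟩
  rw [← hv d]
  congr 1
  ext w
  constructor
  · rintro ⟨i, f, rfl⟩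
    exact ⟨_, f, rfl⟩
  · rintro ⟨t, f, rfl⟩
    obtain ⟨i, rfl⟩ := e.symm.surjective t
    exact ⟨i, f, rfl⟩

namespace CPoset

variable (P : CPoset C)

lemma exists_mapBelow_comp_eq_id (hds : P.DownwardStable) {c d : C} (f : c ⟶ d) (x : P.P c) :
    ∃ h : {z : P.P d // z < P.map f x} →o {y : P.P c // y < x},
      (P.mapBelow f x).comp h = OrderHom.id := by
  obtain ⟨hbij, hreflect⟩ := hds f x
  choose y hy hfy using fun z : {z : P.P d // z < P.map f x} => hbij.surjOn z.2
  refine ⟨⟨fun z => ⟨y z, hy z⟩, fun z₁ z₂ hz => ?_⟩,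
    OrderHom.ext _ _ (funext fun z => Subtype.ext (hfy z))⟩
  exact hreflect _ _ (hy z₁) (hy z₂) (by rw [hfy z₁, hfy z₂]; exact hz)

lemma reducedHmap_mapBelow_surjective (hds : P.DownwardStable) {c d : C} (f : c ⟶ d)
    (x : P.P c) (i : ℤ) : Function.Surjective (reducedHmap (P.mapBelow f x) i) :=
  have ⟨_, hh⟩ := P.exists_mapBelow_comp_eq_id hds f x
  reducedHmap_surjective_of_comp_eq_id hh i

end CPoset

noncomputable def WH.incl (P : CPoset C) (n : ℤ) {c : C} (x : {x : P.P c // P.rk c x = n}) :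
    reducedH {y : P.P c // y < x.1} (n - 2) →ₗ[ℚ] WH P n c :=
  letI := Classical.decEq {x : P.P c // P.rk c x = n}
  DirectSum.lof ℚ {x : P.P c // P.rk c x = n}
    (fun x' => ↥(reducedH {y : P.P c // y < x'.1} (n - 2))) x

lemma WH.iSup_range_incl (P : CPoset C) (n : ℤ) (c : C) :
    ⨆ x, LinearMap.range (WH.incl P n (c := c) x) = ⊤ :=
  letI := Classical.decEq {x : P.P c // P.rk c x = n}
  DFinsupp.iSup_range_lsingle

lemma WHmap_comp_incl (P : CPoset C) (n : ℤ) {c d : C} (f : c ⟶ d)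
    (x : {x : P.P c // P.rk c x = n}) :
    (WHmap P n f).comp (WH.incl P n x) =
      (WH.incl P n ⟨P.map f x.1, (P.map_rk f x.1).trans x.2⟩).comp
        (reducedHmap (P.mapBelow f x.1) (n - 2)).hom :=
  letI := Classical.decEq {x : P.P c // P.rk c x = n}
  LinearMap.ext fun v => DirectSum.toModule_lof ℚ (N := WH P n d)
    (M := fun x' : {x : P.P c // P.rk c x = n} => ↥(reducedH {y : P.P c // y < x'.1} (n - 2)))
    (φ := fun x => (WH.incl P n ⟨P.map f x.1, (P.map_rk f x.1).trans x.2⟩).comp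
      (reducedHmap (P.mapBelow f x.1) (n - 2)).hom) x v

lemma range_WHmap_comp_incl (P : CPoset C) (hds : P.DownwardStable) (n : ℤ) {c d : C}
    (f : c ⟶ d) (x : {x : P.P c // P.rk c x = n}) :
    LinearMap.range ((WHmap P n f).comp (WH.incl P n x)) =
      LinearMap.range (WH.incl P n ⟨P.map f x.1, (P.map_rk f x.1).trans x.2⟩) := by
  rw [WHmap_comp_incl, LinearMap.range_comp_of_range_eq_top]
  exact LinearMap.range_eq_top.2 (P.reducedHmap_mapBelow_surjective hds f x.1 (n - 2))

/-- **Finitely generated Whitney homology.** If a `C`-poset `(P, rk)` is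
combinatorially stable (finitely generated and downward stable), then for every
`n ∈ ℤ` its `n`-th Whitney homology
`c ↦ WH_n(P_c) = ⊕_{x ∈ P_c, rk(x) = n} H̃_{n-2}(Δ(P_c^{<x}); ℚ)`,
with the maps induced by the poset maps, is a finitely generated `C`-module. -/
theorem whitney_homology_finitelyGenerated (P : CPoset C)
    (hfg : P.FinGen) (hds : P.DownwardStable) (n : ℤ) :
    ∃ (N : ℕ) (cs : Fin N → C) (v : ∀ i, WH P n (cs i)),
      ∀ d : C, Submodule.span ℚ
        {w : WH P n d | ∃ (i : Fin N) (f : cs i ⟶ d), WHmap P n f (v i) = w} = ⊤ := by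
  obtain ⟨N, cs, xs, hrk, hgen⟩ := hfg n
  choose k s hs using fun i =>
    Module.Finite.exists_fin (R := ℚ) (M := reducedH {y : P.P (cs i) // y < xs i} (n - 2))
  refine exists_fin_generators (WHmap P n) (T := Σ i, Fin (k i)) (fun t => cs t.1)
    (fun t => WH.incl P n ⟨xs t.1, hrk t.1⟩ (s t.1 t.2)) fun d => ?_
  refine eq_top_iff.2 ((WH.iSup_range_incl P n d).ge.trans (iSup_le fun ⟨y, hy⟩ => ?_))
  obtain ⟨i, f, rfl⟩ := hgen d y hy
  rw [← range_WHmap_comp_incl P hds n f ⟨xs i, hrk i⟩, LinearMap.range_eq_map, ← hs i,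
    Submodule.map_span, Submodule.span_le]
  rintro _ ⟨_, ⟨j, rfl⟩, rfl⟩
  exact Submodule.subset_span ⟨⟨i, j⟩, f, rfl⟩
end

section
/- Let C be a category of FI type, k a field and A a continuous C-arrangement over k. Let z ∈ L_{c0} be a primitive subspace and x ⊆ V^{c1} any linear subspace (not assumed to belong to L_{c1}). If there exist an object d and morphisms f_i : c_i -> d (i = 0,1) with V(f_0)^{-1}(z) = V(f_1)^{-1}(x), then there exists a morphism φ : c0 -> c1 with f_1 ∘ φ = f_0 and V(φ)^{-1}(z) = x (in particular x ∈ L_{c1}). If moreover x is primitive, then φ is an isomorphism. -/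
open CategoryTheory

universe u v

/-- A weak push-out: a pullback square completing the span which is universal
among pullback squares on that span. -/
def IsWeakPushout {C : Type u} [Category.{v} C] {p c1 c2 d : C}
    (f1 : p ⟶ c1) (f2 : p ⟶ c2) (g1 : c1 ⟶ d) (g2 : c2 ⟶ d) : Prop :=
  IsPullback f1 f2 g1 g2 ∧
  ∀ ⦃z : C⦄ (h1 : c1 ⟶ z) (h2 : c2 ⟶ z), IsPullback f1 f2 h1 h2 →
    ∃! h : d ⟶ z, g1 ≫ h = h1 ∧ g2 ≫ h = h2

/-- A category of FI type. -/
class FIType (C : Type u) [Category.{v} C] : Prop where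
  mono : ∀ {a b : C} (f : a ⟶ b), Mono f
  endo_isIso : ∀ {a : C} (f : a ⟶ a), IsIso f
  finitely_many_below : ∀ d : C, ∃ (n : ℕ) (reps : Fin n → C),
    ∀ c : C, Nonempty (c ⟶ d) → ∃ i, Nonempty (c ≅ reps i)
  aut_transitive : ∀ {c d : C} (f g : c ⟶ d), ∃ σ : Aut d, f ≫ σ.hom = g
  has_pullbacks : ∀ {c1 c2 e : C} (g1 : c1 ⟶ e) (g2 : c2 ⟶ e),
    ∃ (p : C) (f1 : p ⟶ c1) (f2 : p ⟶ c2), IsPullback f1 f2 g1 g2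
  has_weakPushouts : ∀ {p c1 c2 : C} (f1 : p ⟶ c1) (f2 : p ⟶ c2),
    ∃ (d : C) (g1 : c1 ⟶ d) (g2 : c2 ⟶ d), IsWeakPushout f1 f2 g1 g2

variable {k : Type} [Field k] {C : Type u} [Category.{v} C]

/-- Continuity: the contravariant diagram of vector spaces takes pullback squares
of `C` to push-out squares of `k`-vector spaces. -/
def VecDiagram.IsContinuous (D : VecDiagram k C) : Prop :=
  ∀ {p c1 c2 d : C} (f1 : p ⟶ c1) (f2 : p ⟶ c2) (g1 : c1 ⟶ d) (g2 : c2 ⟶ d),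
    IsPullback f1 f2 g1 g2 →
    ∀ (Z : Type) [AddCommGroup Z] [Module k Z]
      (h1 : D.V c1 →ₗ[k] Z) (h2 : D.V c2 →ₗ[k] Z),
      h1.comp (D.Vmap g1) = h2.comp (D.Vmap g2) →
      ∃! h : D.V p →ₗ[k] Z, h.comp (D.Vmap f1) = h1 ∧ h.comp (D.Vmap f2) = h2

/-- A subspace `x ⊆ V^d` is primitive if it does not contain the kernel of any
structure map induced by a morphism `c ⟶ d` with `c < d`. -/
def VecDiagram.Primitive (D : VecDiagram k C) {d : C} (x : Submodule k (D.V d)) : Prop :=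
  ∀ (c : C) (f : c ⟶ d), LinearMap.ker (D.Vmap f) ≤ x → Nonempty (d ⟶ c)

/-- The arrangement is generated by the given family of subspaces. -/
def ArrOn.GeneratedBy {D : VecDiagram k C} (A : ArrOn D) {ι : Type}
    (cs : ι → C) (xs : ∀ i, Submodule k (D.V (cs i))) : Prop :=
  (∀ i, xs i ∈ A.L (cs i)) ∧
  ∀ (d : C), ∀ y ∈ A.L d, ∃ (n : ℕ) (idx : Fin n → ι) (fs : ∀ j, cs (idx j) ⟶ d),
    y = ⨅ j, Submodule.comap (D.Vmap (fs j)) (xs (idx j))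

/-- Finite generation of a `C`-arrangement. -/
def ArrOn.FinitelyGenerated {D : VecDiagram k C} (A : ArrOn D) : Prop :=
  ∃ (N : ℕ) (cs : Fin N → C) (xs : ∀ i, Submodule k (D.V (cs i))), A.GeneratedBy cs xs


/-- Key consequence of continuity: in a pullback square, the kernel of the
structure map `V(g0)` is contained in the image under `V(f0)` of the kernel
of `V(f1)`. -/
theorem ker_le_map_ker {D : VecDiagram k C} (hcont : D.IsContinuous)
    {p c0 c1 d : C} {g0 : p ⟶ c0} {g1 : p ⟶ c1} {f0 : c0 ⟶ d} {f1 : c1 ⟶ d}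
    (hpb : IsPullback g0 g1 f0 f1) :
    LinearMap.ker (D.Vmap g0) ≤
      Submodule.map (D.Vmap f0) (LinearMap.ker (D.Vmap f1)) := by
  set K := Submodule.map (D.Vmap f0) (LinearMap.ker (D.Vmap f1)) with hK
  obtain ⟨s, hs⟩ := (D.Vmap f1).exists_rightInverse_of_surjective
    (LinearMap.range_eq_top.mpr (D.Vmap_surj f1))
  have hsapp : ∀ w, D.Vmap f1 (s w) = w := fun w => by
    simpa using LinearMap.congr_fun hs w
  have hcomm : K.mkQ.comp (D.Vmap f0)
      = ((K.mkQ.comp (D.Vmap f0)).comp s).comp (D.Vmap f1) := by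
    ext w
    simp only [LinearMap.comp_apply, Submodule.mkQ_apply]
    rw [Submodule.Quotient.eq]
    have h1 : D.Vmap f0 w - D.Vmap f0 (s (D.Vmap f1 w))
        = D.Vmap f0 (w - s (D.Vmap f1 w)) := by rw [map_sub]
    rw [h1, hK]
    refine Submodule.mem_map_of_mem ?_
    simp [LinearMap.mem_ker, map_sub, hsapp]
  obtain ⟨h, ⟨hh0, -⟩, -⟩ := hcont g0 g1 f0 f1 hpb (D.V c0 ⧸ K) K.mkQ
    ((K.mkQ.comp (D.Vmap f0)).comp s) hcomm
  intro v hv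
  have h1 : K.mkQ v = h (D.Vmap g0 v) := (LinearMap.congr_fun hh0 v).symm
  rw [LinearMap.mem_ker.mp hv, map_zero] at h1
  rwa [← Submodule.Quotient.mk_eq_zero K, ← Submodule.mkQ_apply]

/-- **Subspaces with equal image.** Let `A` be a continuous `C`-arrangement over
a category of FI type, `z ∈ L_{c0}` primitive and `x ⊆ V^{c1}` any subspace.
If `V(f₀)⁻¹(z) = V(f₁)⁻¹(x)` for some morphisms `fᵢ : cᵢ ⟶ d`, then there is a
morphism `φ : c0 ⟶ c1` with `f₁ ∘ φ = f₀` and `V(φ)⁻¹(z) = x`; in particular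
`x ∈ L_{c1}`.  If moreover `x` is primitive, `φ` is an isomorphism. -/
theorem equal_images [FIType C] {D : VecDiagram k C} (A : ArrOn D)
    (hcont : D.IsContinuous)
    {c0 c1 d : C} (z : Submodule k (D.V c0)) (hzL : z ∈ A.L c0)
    (hzprim : D.Primitive z) (x : Submodule k (D.V c1))
    (f0 : c0 ⟶ d) (f1 : c1 ⟶ d)
    (heq : Submodule.comap (D.Vmap f0) z = Submodule.comap (D.Vmap f1) x) :
    ∃ φ : c0 ⟶ c1, φ ≫ f1 = f0 ∧ Submodule.comap (D.Vmap φ) z = x ∧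
      x ∈ A.L c1 ∧ (D.Primitive x → IsIso φ) := by
  obtain ⟨p, g0, g1, hpb⟩ := FIType.has_pullbacks f0 f1
  have hk0 : LinearMap.ker (D.Vmap g0)
      ≤ Submodule.map (D.Vmap f0) (LinearMap.ker (D.Vmap f1)) :=
    ker_le_map_ker hcont hpb
  have hk1 : LinearMap.ker (D.Vmap g1)
      ≤ Submodule.map (D.Vmap f1) (LinearMap.ker (D.Vmap f0)) :=
    ker_le_map_ker hcont hpb.flip
  have hkf1 : LinearMap.ker (D.Vmap f1) ≤ Submodule.comap (D.Vmap f0) z := by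
    rw [heq]
    intro v hv
    simp only [Submodule.mem_comap, LinearMap.mem_ker.mp hv]
    exact x.zero_mem
  have hkf0 : LinearMap.ker (D.Vmap f0) ≤ Submodule.comap (D.Vmap f1) x := by
    rw [← heq]
    intro v hv
    simp only [Submodule.mem_comap, LinearMap.mem_ker.mp hv]
    exact z.zero_mem
  have hzker : LinearMap.ker (D.Vmap g0) ≤ z :=
    hk0.trans ((Submodule.map_mono hkf1).trans (Submodule.map_comap_le _ _))
  obtain ⟨h0⟩ := hzprim p g0 hzker
  haveI := FIType.endo_isIso (h0 ≫ g0)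
  set h' : c0 ⟶ p := inv (h0 ≫ g0) ≫ h0 with hh'def
  have hh' : h' ≫ g0 = 𝟙 c0 := by
    rw [hh'def, Category.assoc, IsIso.inv_hom_id]
  have hHG : (D.Vmap h').comp (D.Vmap g0) = LinearMap.id := by
    rw [← D.Vmap_comp, hh', D.Vmap_id]
  have hHGapp : ∀ u, D.Vmap h' (D.Vmap g0 u) = u := fun u => by
    simpa using LinearMap.congr_fun hHG u
  have hGH : ∀ w, D.Vmap g0 (D.Vmap h' w) = w := by
    intro w
    obtain ⟨u, rfl⟩ := D.Vmap_surj g0 w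
    rw [hHGapp]
  have hmap : Submodule.map (D.Vmap g0) z = Submodule.map (D.Vmap g1) x := by
    have hz : Submodule.map (D.Vmap f0) (Submodule.comap (D.Vmap f0) z) = z :=
      Submodule.map_comap_eq_of_surjective (D.Vmap_surj f0) z
    have hx : Submodule.map (D.Vmap f1) (Submodule.comap (D.Vmap f1) x) = x :=
      Submodule.map_comap_eq_of_surjective (D.Vmap_surj f1) x
    calc Submodule.map (D.Vmap g0) z
        = Submodule.map (D.Vmap (g0 ≫ f0)) (Submodule.comap (D.Vmap f0) z) := by
          rw [D.Vmap_comp, Submodule.map_comp, hz]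
      _ = Submodule.map (D.Vmap (g1 ≫ f1)) (Submodule.comap (D.Vmap f1) x) := by
          rw [hpb.w, heq]
      _ = Submodule.map (D.Vmap g1) x := by
          rw [D.Vmap_comp, Submodule.map_comp, hx]
  have hker1x : LinearMap.ker (D.Vmap g1) ≤ x :=
    hk1.trans ((Submodule.map_mono hkf0).trans (Submodule.map_comap_le _ _))
  have hphi : Submodule.comap (D.Vmap (h' ≫ g1)) z = x := by
    rw [D.Vmap_comp]
    ext v
    simp only [Submodule.mem_comap, LinearMap.comp_apply]
    constructor
    · intro hv
      have h1 : D.Vmap g1 v ∈ Submodule.map (D.Vmap g1) x := by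
        rw [← hmap]
        have h2 := Submodule.mem_map_of_mem (f := D.Vmap g0) hv
        rwa [hGH] at h2
      obtain ⟨u, hu, huv⟩ := h1
      have h3 : v - u ∈ LinearMap.ker (D.Vmap g1) := by
        rw [LinearMap.mem_ker, map_sub, huv, sub_self]
      have h4 := x.add_mem (hker1x h3) hu
      simpa using h4
    · intro hv
      have h1 : D.Vmap g1 v ∈ Submodule.map (D.Vmap g0) z := by
        rw [hmap]; exact Submodule.mem_map_of_mem hv
      obtain ⟨w, hw, hwv⟩ := h1
      rw [← hwv, hHGapp]
      exact hw
  refine ⟨h' ≫ g1, ?_, hphi, ?_, ?_⟩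
  · rw [Category.assoc, ← hpb.w, ← Category.assoc, hh', Category.id_comp]
  · rw [← hphi]; exact A.L_comap _ z hzL
  · intro hxprim
    have hkphi : LinearMap.ker (D.Vmap (h' ≫ g1)) ≤ x := by
      rw [← hphi]
      intro v hv
      simp only [Submodule.mem_comap, LinearMap.mem_ker.mp hv]
      exact z.zero_mem
    obtain ⟨ψ⟩ := hxprim c0 (h' ≫ g1) hkphi
    haveI := FIType.endo_isIso ((h' ≫ g1) ≫ ψ)
    haveI := FIType.endo_isIso (ψ ≫ (h' ≫ g1))
    have hm : (h' ≫ g1) ≫ (ψ ≫ inv ((h' ≫ g1) ≫ ψ)) = 𝟙 c0 := by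
      rw [← Category.assoc, IsIso.hom_inv_id]
    have hr : (inv (ψ ≫ (h' ≫ g1)) ≫ ψ) ≫ (h' ≫ g1) = 𝟙 c1 := by
      rw [Category.assoc, IsIso.inv_hom_id]
    have hmr : ψ ≫ inv ((h' ≫ g1) ≫ ψ) = inv (ψ ≫ (h' ≫ g1)) ≫ ψ := by
      calc ψ ≫ inv ((h' ≫ g1) ≫ ψ)
          = ((inv (ψ ≫ (h' ≫ g1)) ≫ ψ) ≫ (h' ≫ g1)) ≫ (ψ ≫ inv ((h' ≫ g1) ≫ ψ)) := by
            rw [hr, Category.id_comp]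
        _ = (inv (ψ ≫ (h' ≫ g1)) ≫ ψ) ≫ ((h' ≫ g1) ≫ (ψ ≫ inv ((h' ≫ g1) ≫ ψ))) := by
            rw [Category.assoc]
        _ = inv (ψ ≫ (h' ≫ g1)) ≫ ψ := by rw [hm, Category.comp_id]
    exact ⟨⟨ψ ≫ inv ((h' ≫ g1) ≫ ψ), hm, by rw [hmr]; exact hr⟩⟩
end

section
/- Let C be a category of FI type, k a field and A a normal C-arrangement over k. Then every subspace of the arrangement is the image of a primitive subspace: for every object c and every x ∈ L_c there exist an object e, a primitive subspace z ∈ L_e and a morphism f : e -> c with V(f)^{-1}(z) = x. -/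
open CategoryTheory

universe u v

variable {k : Type} [Field k] {C : Type u} [Category.{v} C]

/-- **Primitive generators.** Every subspace of a normal `C`-arrangement over a
category of FI type is the preimage of a primitive subspace of the arrangement. -/
theorem exists_primitive_preimage [FIType C] {D : VecDiagram k C} (A : ArrOn D)
    (hnorm : A.Normal) (c : C) (x : Submodule k (D.V c)) (hx : x ∈ A.L c) :
    ∃ (e : C) (z : Submodule k (D.V e)) (f : e ⟶ c),
      z ∈ A.L e ∧ D.Primitive z ∧ Submodule.comap (D.Vmap f) z = x := by
  classical
  obtain ⟨n, reps, hreps⟩ := FIType.finitely_many_below (C := C) c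
  let meas : C → ℕ := fun d => (Finset.univ.filter (fun i => Nonempty (reps i ⟶ d))).card
  have key : ∀ m : ℕ, ∀ d : C, Nonempty (d ⟶ c) → meas d ≤ m → ∀ y ∈ A.L d,
      ∃ (e : C) (z : Submodule k (D.V e)) (f : e ⟶ d),
        z ∈ A.L e ∧ D.Primitive z ∧ Submodule.comap (D.Vmap f) z = y := by
    intro m
    induction m with
    | zero =>
      intro d hd hmeas y hy
      exfalso
      obtain ⟨i0, ⟨iso⟩⟩ := hreps d hd
      have : i0 ∈ Finset.univ.filter (fun i => Nonempty (reps i ⟶ d)) := by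
        simp only [Finset.mem_filter, Finset.mem_univ, true_and]
        exact ⟨iso.inv⟩
      have h1 : 0 < meas d := Finset.card_pos.mpr ⟨i0, this⟩
      omega
    | succ m ih =>
      intro d hd hmeas y hy
      by_cases hp : D.Primitive y
      · refine ⟨d, y, 𝟙 d, hy, hp, ?_⟩
        rw [D.Vmap_id, Submodule.comap_id]
      · simp only [VecDiagram.Primitive, not_forall] at hp
        obtain ⟨c', f, hker, hno⟩ := hp
        have hy' : Submodule.map (D.Vmap f) y ∈ A.L c' := hnorm f y hy hker
        have hcomap : Submodule.comap (D.Vmap f) (Submodule.map (D.Vmap f) y) = y := by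
          rw [Submodule.comap_map_eq]
          exact sup_eq_left.mpr hker
        have hd' : Nonempty (c' ⟶ c) := ⟨f ≫ hd.some⟩
        have hmeas' : meas c' < meas d := by
          apply Finset.card_lt_card
          rw [Finset.ssubset_iff_of_subset]
          · obtain ⟨i0, ⟨iso⟩⟩ := hreps d hd
            refine ⟨i0, ?_, ?_⟩
            · simp only [Finset.mem_filter, Finset.mem_univ, true_and]
              exact ⟨iso.inv⟩
            · simp only [Finset.mem_filter, Finset.mem_univ, true_and]
              rintro ⟨g⟩
              exact hno ⟨iso.hom ≫ g⟩
          · intro i hi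
            simp only [Finset.mem_filter, Finset.mem_univ, true_and] at hi ⊢
            exact ⟨hi.some ≫ f⟩
        obtain ⟨e, z, f', hz, hprim, hcom⟩ :=
          ih c' hd' (by omega) (Submodule.map (D.Vmap f) y) hy'
        refine ⟨e, z, f' ≫ f, hz, hprim, ?_⟩
        rw [D.Vmap_comp, Submodule.comap_comp]
        rw [show Submodule.comap (D.Vmap f') z = Submodule.map (D.Vmap f) y from hcom]
        exact hcomap
  have hmc : meas c ≤ n := by
    calc meas c ≤ Finset.univ.card := Finset.card_filter_le _ _
    _ = n := Finset.card_univ.trans (Fintype.card_fin n)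
  exact key n c ⟨𝟙 c⟩ hmc x hx
end

section
/- Let k be a field, C a small category, and let B and B' be two normal C-arrangements over k having the same underlying contravariant diagram of vector spaces V^•, with intersection data (L_c) and (L'_c) respectively. Suppose that for every object c there exists an object d with Hom(c,d) nonempty and L_d = L'_d. Then B = B', i.e. L_c = L'_c for every object c. -/
open CategoryTheory

universe u v

variable {k : Type} [Field k] {C : Type u} [Category.{v} C]

/-- **Uniqueness of normal extensions.** Two normal `C`-arrangements on the same
underlying diagram of vector spaces which agree on a cofinal collection of
objects (for every object `c` there is an object `d` with `Hom(c,d)` nonempty on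
which they agree) are equal. -/
theorem normal_arrangement_unique {D : VecDiagram k C} (B B' : ArrOn D)
    (hB : B.Normal) (hB' : B'.Normal)
    (hagree : ∀ c : C, ∃ d : C, Nonempty (c ⟶ d) ∧ B.L d = B'.L d) :
    ∀ c : C, B.L c = B'.L c := by
  intro c
  obtain ⟨d, ⟨f⟩, hLd⟩ := hagree c
  ext x
  constructor
  · intro hx
    have h1 : Submodule.comap (D.Vmap f) x ∈ B.L d := B.L_comap f x hx
    have h2 : Submodule.comap (D.Vmap f) x ∈ B'.L d := hLd ▸ h1
    have hk : LinearMap.ker (D.Vmap f) ≤ Submodule.comap (D.Vmap f) x := by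
      intro v hv
      simp [Submodule.mem_comap, LinearMap.mem_ker.mp hv]
    have := hB' f _ h2 hk
    rwa [Submodule.map_comap_eq_of_surjective (D.Vmap_surj f)] at this
  · intro hx
    have h1 : Submodule.comap (D.Vmap f) x ∈ B'.L d := B'.L_comap f x hx
    have h2 : Submodule.comap (D.Vmap f) x ∈ B.L d := hLd ▸ h1
    have hk : LinearMap.ker (D.Vmap f) ≤ Submodule.comap (D.Vmap f) x := by
      intro v hv
      simp [Submodule.mem_comap, LinearMap.mem_ker.mp hv]
    have := hB f _ h2 hk
    rwa [Submodule.map_comap_eq_of_surjective (D.Vmap_surj f)] at this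
end
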